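/- arXiv:2405.14760 — 4 statements merged into one kernel-verified Lean document; each statement's English description precedes it below -/
import Mathlib

section
/- Let p ≠ 0 be a real number and define σ : ℝ → ℝ by σ(r) ≔ −(r² + p²)/(4p). If β : ℝ → ℝ is twice continuously differentiable and satisfies σ(r)·β''(r) + σ'(r)·β'(r) + β(r)/(4·σ(r)) = 0 for all r ∈ ℝ, then there exist unique real numbers k₁ and k₂ such that β(r) = k₁·(p² − r²)/(r² + p²) + k₂·r/(r² + p²) for all r ∈ ℝ. -/
/-!
Under `r = p tan θ` the equation becomes `β_θθ + 4β = 0`, whose solutions are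
`k₁ cos 2θ + k₂ sin 2θ / (2p)` with `cos 2θ = (p² − r²)/(r² + p²)` and `sin 2θ = 2pr/(r² + p²)`.
The coefficients are recovered from any solution by the first integrals
`β cos 2θ − β_θ sin 2θ / 2` and `2p (β sin 2θ + β_θ cos 2θ / 2)`, which `sigmaFirstIntegral`
writes in the variable `r`. Their derivatives vanish by the equation, so they are constant; that
gives existence, and uniqueness is read off at `r = 0` and `r = p`.
-/

/-- The function `σ(r) = −(r² + p²)/(4p)` (with `p ≠ 0`). -/
noncomputable def sigmaFun (p : ℝ) : ℝ → ℝ := fun r => -(r ^ 2 + p ^ 2) / (4 * p)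

theorem hasDerivAt_sigmaFun (p r : ℝ) : HasDerivAt (sigmaFun p) (-r / (2 * p)) r :=
  ((((hasDerivAt_pow 2 r).add_const (p ^ 2)).neg).div_const (4 * p)).congr_deriv (by ring)

noncomputable def sigmaOdeSolution (p : ℝ) (k : ℝ × ℝ) (r : ℝ) : ℝ :=
  k.1 * (p ^ 2 - r ^ 2) / (r ^ 2 + p ^ 2) + k.2 * r / (r ^ 2 + p ^ 2)

noncomputable def sigmaFirstIntegral (p : ℝ) (f g : ℝ → ℝ) (r : ℝ) : ℝ × ℝ :=
  (f r * (p ^ 2 - r ^ 2) / (r ^ 2 + p ^ 2) - r * g r,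
    4 * p ^ 2 * r * f r / (r ^ 2 + p ^ 2) + (p ^ 2 - r ^ 2) * g r)

section

variable {p : ℝ}

theorem normal_form_of_sigmaFun_ode (hp : p ≠ 0) {r b₀ b₁ b₂ : ℝ}
    (h : sigmaFun p r * b₂ + deriv (sigmaFun p) r * b₁ + b₀ / (4 * sigmaFun p r) = 0) :
    (r ^ 2 + p ^ 2) ^ 2 * b₂ + 2 * r * (r ^ 2 + p ^ 2) * b₁ + 4 * p ^ 2 * b₀ = 0 := by
  have hr : r ^ 2 + p ^ 2 ≠ 0 := by positivity
  rw [(hasDerivAt_sigmaFun p r).deriv, sigmaFun] at h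
  field_simp at h
  linear_combination (-1 / 2) * h

theorem hasDerivAt_sigmaFirstIntegral (hp : p ≠ 0) {f g : ℝ → ℝ} {r g' : ℝ}
    (hf : HasDerivAt f (g r) r) (hg : HasDerivAt g g' r)
    (hode : (r ^ 2 + p ^ 2) ^ 2 * g' + 2 * r * (r ^ 2 + p ^ 2) * g r + 4 * p ^ 2 * f r = 0) :
    HasDerivAt (sigmaFirstIntegral p f g) 0 r := by
  have hr : r ^ 2 + p ^ 2 ≠ 0 := by positivity
  have hden : HasDerivAt (fun r : ℝ => r ^ 2 + p ^ 2) (2 * r) r := by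
    simpa using (hasDerivAt_pow 2 r).add_const (p ^ 2)
  have hnum : HasDerivAt (fun r : ℝ => p ^ 2 - r ^ 2) (-(2 * r)) r := by
    simpa using (hasDerivAt_pow 2 r).const_sub (p ^ 2)
  have h₁ := ((hf.fun_mul hnum).fun_div hden hr).fun_sub ((hasDerivAt_id' r).fun_mul hg)
  have h₂ := ((((hasDerivAt_id' r).const_mul (4 * p ^ 2)).fun_mul hf).fun_div hden hr).fun_add
    (hnum.fun_mul hg)
  refine (h₁.prodMk h₂).congr_deriv (Prod.ext ?_ ?_) <;> dsimp only [Prod.fst_zero, Prod.snd_zero]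
  · field_simp
    linear_combination (-r) * hode
  · field_simp
    linear_combination (p ^ 2 - r ^ 2) * hode

theorem sigmaOdeSolution_sigmaFirstIntegral (hp : p ≠ 0) (f g : ℝ → ℝ) (r : ℝ) :
    sigmaOdeSolution p (sigmaFirstIntegral p f g r) r = f r := by
  have hr : r ^ 2 + p ^ 2 ≠ 0 := by positivity
  simp only [sigmaOdeSolution, sigmaFirstIntegral]
  field_simp
  ring

theorem sigmaOdeSolution_injective (hp : p ≠ 0) : Function.Injective (sigmaOdeSolution p) := by
  intro k k' h
  have hp2 : p ^ 2 + p ^ 2 ≠ 0 := by positivity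
  refine Prod.ext ?_ ?_
  · simpa [sigmaOdeSolution, hp] using congrFun h 0
  · simpa [sigmaOdeSolution, hp, hp2] using congrFun h p

end

/-- Every `C²` solution `β` of `σβ'' + σ'β' + β/(4σ) = 0` with `σ(r) = −(r² + p²)/(4p)`,
`p ≠ 0`, is of the form `β(r) = k₁(p² − r²)/(r² + p²) + k₂ r/(r² + p²)` for unique
real numbers `k₁, k₂`. -/
theorem ode_solutions_unique_form (p : ℝ) (hp : p ≠ 0)
    (β : ℝ → ℝ) (hβ : ContDiff ℝ 2 β)
    (h : ∀ r : ℝ, sigmaFun p r * deriv (deriv β) r + deriv (sigmaFun p) r * deriv β r +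
      β r / (4 * sigmaFun p r) = 0) :
    ∃! k : ℝ × ℝ, ∀ r : ℝ,
      β r = k.1 * (p ^ 2 - r ^ 2) / (r ^ 2 + p ^ 2) + k.2 * r / (r ^ 2 + p ^ 2) := by
  set I := sigmaFirstIntegral p β (deriv β)
  have hI : ∀ r, HasDerivAt I 0 r := fun r =>
    hasDerivAt_sigmaFirstIntegral hp (hβ.differentiable two_ne_zero r).hasDerivAt
      (hβ.differentiable_deriv_two r).hasDerivAt (normal_form_of_sigmaFun_ode hp (h r))
  have hconst : ∀ r, I r = I 0 :=
    (is_const_of_deriv_eq_zero (fun r => (hI r).differentiableAt) (fun r => (hI r).deriv) · 0)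
  have hsol : ∀ r, β r = sigmaOdeSolution p (I 0) r := fun r => by
    rw [← hconst r, sigmaOdeSolution_sigmaFirstIntegral hp]
  exact ⟨I 0, hsol, fun k hk =>
    sigmaOdeSolution_injective hp (funext fun r => (hk r).symm.trans (hsol r))⟩
end

section
/- Let V ⊆ 𝔻 be open and φ : V → ℝ twice differentiable, and set ψ ≔ φ/φ₀ (well defined since φ₀ < 0 on 𝔻). Then φ satisfies Δφ + 8·φ/(1 + x² + y²)² = 0 on V if and only if ψ satisfies Δψ + (2/φ₀)·(φ₀ₓ·ψ_x + φ₀_y·ψ_y) = 0 on V, where φ₀ₓ, φ₀_y denote the partial derivatives of φ₀. -/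
/-- Partial derivative in `x` of a function of two real variables. -/
noncomputable def pdx (f : ℝ × ℝ → ℝ) (p : ℝ × ℝ) : ℝ := fderiv ℝ f p (1, 0)

/-- Partial derivative in `y` of a function of two real variables. -/
noncomputable def pdy (f : ℝ × ℝ → ℝ) (p : ℝ × ℝ) : ℝ := fderiv ℝ f p (0, 1)

/-- Laplacian of a function of two real variables. -/
noncomputable def lap (f : ℝ × ℝ → ℝ) (p : ℝ × ℝ) : ℝ := pdx (pdx f) p + pdy (pdy f) p

/-- The special solution `φ₀(x,y) = −(1 − x² − y²)/(1 + x² + y²)`. -/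
noncomputable def phi0 : ℝ × ℝ → ℝ := fun p =>
  -(1 - p.1 ^ 2 - p.2 ^ 2) / (1 + p.1 ^ 2 + p.2 ^ 2)

/-!
`φ₀` itself solves `Δφ₀ + 8φ₀/(1 + x² + y²)² = 0` on the whole plane and is negative on `𝔻`.
For any nonvanishing solution `g` of `Δg + c g = 0`, the product rule
`Δ(gψ) = ψ Δg + 2 ∇g·∇ψ + g Δψ` gives `Δ(gψ) + c gψ = g (Δψ + (2/g) ∇g·∇ψ)`, so `φ = gψ` solves
the first equation exactly where `ψ` solves the second. Only the first partials of `φ` need to be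
differentiable: then so is the whole derivative `Dφ`, and this is preserved by products and by
division by the nowhere vanishing `φ₀`.
-/

open Filter Topology

section SecondDerivatives

variable {E : Type*} [NormedAddCommGroup E] [NormedSpace ℝ E] {f g : E → ℝ} {U : Set E}

theorem fderiv_mul_eventuallyEq (hU : IsOpen U) (hf : DifferentiableOn ℝ f U)
    (hg : DifferentiableOn ℝ g U) {x : E} (hx : x ∈ U) :
    fderiv ℝ (fun y => f y * g y) =ᶠ[𝓝 x] fun y => f y • fderiv ℝ g y + g y • fderiv ℝ f y :=
  eventually_of_mem (hU.mem_nhds hx) fun _ hy =>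
    fderiv_fun_mul (hf.differentiableAt (hU.mem_nhds hy)) (hg.differentiableAt (hU.mem_nhds hy))

theorem differentiableOn_fderiv_mul (hU : IsOpen U) (hf : DifferentiableOn ℝ f U)
    (hf' : DifferentiableOn ℝ (fderiv ℝ f) U) (hg : DifferentiableOn ℝ g U)
    (hg' : DifferentiableOn ℝ (fderiv ℝ g) U) :
    DifferentiableOn ℝ (fderiv ℝ (fun y => f y * g y)) U :=
  ((hf.smul hg').add (hg.smul hf')).congr fun _ hy =>
    (fderiv_mul_eventuallyEq hU hf hg hy).eq_of_nhds

theorem differentiableOn_fderiv_inv (hU : IsOpen U) (hg : DifferentiableOn ℝ g U)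
    (hg' : DifferentiableOn ℝ (fderiv ℝ g) U) (hg0 : ∀ y ∈ U, g y ≠ 0) :
    DifferentiableOn ℝ (fderiv ℝ (fun y => (g y)⁻¹)) U :=
  (((hg.pow 2).inv fun y hy => pow_ne_zero 2 (hg0 y hy)).neg.smul hg').congr fun y hy =>
    ((hasDerivAt_inv (hg0 y hy)).comp_hasFDerivAt y
      (hg.differentiableAt (hU.mem_nhds hy)).hasFDerivAt).fderiv

theorem fderiv_fderiv_mul_apply (hU : IsOpen U) (hf : DifferentiableOn ℝ f U)
    (hf' : DifferentiableOn ℝ (fderiv ℝ f) U) (hg : DifferentiableOn ℝ g U)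
    (hg' : DifferentiableOn ℝ (fderiv ℝ g) U) {x : E} (hx : x ∈ U) (v w : E) :
    fderiv ℝ (fun y => fderiv ℝ (fun z => f z * g z) y v) x w =
      fderiv ℝ (fun y => fderiv ℝ f y v) x w * g x + fderiv ℝ f x v * fderiv ℝ g x w +
        fderiv ℝ f x w * fderiv ℝ g x v + f x * fderiv ℝ (fun y => fderiv ℝ g y v) x w := by
  have hUx := hU.mem_nhds hx
  have hfv : DifferentiableAt ℝ (fun y => fderiv ℝ f y v) x :=
    (hf'.differentiableAt hUx).clm_apply (differentiableAt_const v)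
  have hgv : DifferentiableAt ℝ (fun y => fderiv ℝ g y v) x :=
    (hg'.differentiableAt hUx).clm_apply (differentiableAt_const v)
  have hprod : (fun y => fderiv ℝ (fun z => f z * g z) y v) =ᶠ[𝓝 x]
      fun y => fderiv ℝ f y v * g y + f y * fderiv ℝ g y v :=
    (fderiv_mul_eventuallyEq hU hf hg hx).mono fun _ hy => by
      simp only [hy, add_apply, smul_apply, smul_eq_mul]
      ring
  have hsum : HasFDerivAt (fun y => fderiv ℝ f y v * g y + f y * fderiv ℝ g y v) _ x :=
    (hfv.hasFDerivAt.mul (hg.differentiableAt hUx).hasFDerivAt).add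
      ((hf.differentiableAt hUx).hasFDerivAt.mul hgv.hasFDerivAt)
  rw [hprod.fderiv_eq, hsum.fderiv]
  simp only [add_apply, smul_apply, smul_eq_mul]
  ring

end SecondDerivatives

section Plane

variable {f g : ℝ × ℝ → ℝ} {V : Set (ℝ × ℝ)} {p : ℝ × ℝ}

theorem Filter.EventuallyEq.lap_eq (h : f =ᶠ[𝓝 p] g) : lap f p = lap g p := by
  have hx : pdx f =ᶠ[𝓝 p] pdx g := (h.fderiv (𝕜 := ℝ)).mono fun _ hq => by simp only [pdx, hq]
  have hy : pdy f =ᶠ[𝓝 p] pdy g := (h.fderiv (𝕜 := ℝ)).mono fun _ hq => by simp only [pdy, hq]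
  simp only [lap, pdx.eq_def, pdy.eq_def] at hx hy ⊢
  rw [hx.fderiv_eq, hy.fderiv_eq]

theorem lap_mul (hV : IsOpen V) (hf : DifferentiableOn ℝ f V)
    (hf' : DifferentiableOn ℝ (fderiv ℝ f) V) (hg : DifferentiableOn ℝ g V)
    (hg' : DifferentiableOn ℝ (fderiv ℝ g) V) (hp : p ∈ V) :
    lap (fun q => f q * g q) p =
      lap f p * g p + 2 * (pdx f p * pdx g p + pdy f p * pdy g p) + f p * lap g p := by
  have hxx : pdx (pdx fun q => f q * g q) p = pdx (pdx f) p * g p + pdx f p * pdx g p +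
      pdx f p * pdx g p + f p * pdx (pdx g) p :=
    fderiv_fderiv_mul_apply hV hf hf' hg hg' hp (1, 0) (1, 0)
  have hyy : pdy (pdy fun q => f q * g q) p = pdy (pdy f) p * g p + pdy f p * pdy g p +
      pdy f p * pdy g p + f p * pdy (pdy g) p :=
    fderiv_fderiv_mul_apply hV hf hf' hg hg' hp (0, 1) (0, 1)
  rw [lap, lap, lap, hxx, hyy]
  ring

theorem differentiableAt_fderiv_of_pdx_pdy (hx : DifferentiableAt ℝ (pdx f) p)
    (hy : DifferentiableAt ℝ (pdy f) p) : DifferentiableAt ℝ (fderiv ℝ f) p := by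
  have hsplit : fderiv ℝ f = fun q => pdx f q • ContinuousLinearMap.fst ℝ ℝ ℝ +
      pdy f q • ContinuousLinearMap.snd ℝ ℝ ℝ := by
    funext q
    refine ContinuousLinearMap.ext fun ⟨a, b⟩ => ?_
    have hab : ((a, b) : ℝ × ℝ) = a • (1, 0) + b • (0, 1) := by simp
    rw [hab, map_add, map_smul, map_smul]
    simp [pdx, pdy, mul_comm]
  rw [hsplit]
  exact (hx.smul_const _).add (hy.smul_const _)

theorem pdx_eq_of_hasDerivAt (hf : DifferentiableAt ℝ f p) {d : ℝ}
    (h : HasDerivAt (fun t => f (t, p.2)) d p.1) : pdx f p = d :=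
  (hf.hasFDerivAt.comp_hasDerivAt p.1
    ((hasDerivAt_id p.1).prodMk (hasDerivAt_const p.1 p.2))).unique h

theorem pdy_eq_of_hasDerivAt (hf : DifferentiableAt ℝ f p) {d : ℝ}
    (h : HasDerivAt (fun t => f (p.1, t)) d p.2) : pdy f p = d :=
  (hf.hasFDerivAt.comp_hasDerivAt p.2
    ((hasDerivAt_const p.2 p.1).prodMk (hasDerivAt_id p.2))).unique h

end Plane

section GroundState

variable {φ g c : ℝ × ℝ → ℝ} {V : Set (ℝ × ℝ)}

theorem lap_add_mul_eq_mul_of_lap_add_mul_eq_zero (hV : IsOpen V)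
    (hφ : DifferentiableOn ℝ φ V) (hφ' : DifferentiableOn ℝ (fderiv ℝ φ) V)
    (hg : DifferentiableOn ℝ g V) (hg' : DifferentiableOn ℝ (fderiv ℝ g) V)
    (hg0 : ∀ q ∈ V, g q ≠ 0) (hgc : ∀ q ∈ V, lap g q + c q * g q = 0)
    {p : ℝ × ℝ} (hp : p ∈ V) :
    letI ψ : ℝ × ℝ → ℝ := fun q => φ q / g q
    lap φ p + c p * φ p =
      g p * (lap ψ p + (2 / g p) * (pdx g p * pdx ψ p + pdy g p * pdy ψ p)) := by
  set ψ : ℝ × ℝ → ℝ := fun q => φ q / g q with hψ_def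
  have hψ_eq : ψ = fun q => φ q * (g q)⁻¹ := by simp only [hψ_def, div_eq_mul_inv]
  have hψ : DifferentiableOn ℝ ψ V := hψ_eq ▸ hφ.mul (hg.inv hg0)
  have hψ' : DifferentiableOn ℝ (fderiv ℝ ψ) V := by
    rw [hψ_eq]
    exact differentiableOn_fderiv_mul hV hφ hφ' (hg.inv hg0)
      (differentiableOn_fderiv_inv hV hg hg' hg0)
  have hφ_eq : φ =ᶠ[𝓝 p] fun q => g q * ψ q :=
    eventually_of_mem (hV.mem_nhds hp) fun q hq => (mul_div_cancel₀ (φ q) (hg0 q hq)).symm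
  have hlap_g : lap g p = -(c p * g p) := eq_neg_of_add_eq_zero_left (hgc p hp)
  rw [hφ_eq.lap_eq, lap_mul hV hg hg' hψ hψ' hp, hφ_eq.eq_of_nhds, hlap_g]
  field_simp [hg0 p hp]
  ring

theorem lap_add_mul_eq_zero_iff_of_lap_add_mul_eq_zero (hV : IsOpen V)
    (hφ : DifferentiableOn ℝ φ V) (hφ' : DifferentiableOn ℝ (fderiv ℝ φ) V)
    (hg : DifferentiableOn ℝ g V) (hg' : DifferentiableOn ℝ (fderiv ℝ g) V)
    (hg0 : ∀ q ∈ V, g q ≠ 0) (hgc : ∀ q ∈ V, lap g q + c q * g q = 0) :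
    letI ψ : ℝ × ℝ → ℝ := fun q => φ q / g q
    (∀ p ∈ V, lap φ p + c p * φ p = 0) ↔
      ∀ p ∈ V, lap ψ p + (2 / g p) * (pdx g p * pdx ψ p + pdy g p * pdy ψ p) = 0 := by
  refine forall₂_congr fun p hp => ?_
  rw [lap_add_mul_eq_mul_of_lap_add_mul_eq_zero hV hφ hφ' hg hg' hg0 hgc hp,
    mul_eq_zero, or_iff_right (hg0 p hp)]

end GroundState

section Phi0

theorem contDiff_phi0 {n : WithTop ℕ∞} : ContDiff ℝ n phi0 :=
  ContDiff.div (by fun_prop) (by fun_prop) fun q => by positivity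

theorem differentiable_phi0 : Differentiable ℝ phi0 :=
  (contDiff_phi0 (n := 1)).differentiable one_ne_zero

theorem phi0_neg {p : ℝ × ℝ} (hp : p.1 ^ 2 + p.2 ^ 2 < 1) : phi0 p < 0 :=
  div_neg_of_neg_of_pos (by linarith) (by positivity)

/-- `φ₀` along a horizontal or vertical line; `c` is the square of the fixed coordinate. -/
theorem hasDerivAt_phi0_line {c : ℝ} (hc : 0 ≤ c) (t : ℝ) :
    HasDerivAt (fun t => -(1 - (t ^ 2 + c)) / (1 + (t ^ 2 + c)))
      (4 * t / (1 + (t ^ 2 + c)) ^ 2) t := by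
  have hs : 1 + (t ^ 2 + c) ≠ 0 := by positivity
  refine ((((hasDerivAt_pow 2 t).add_const c).const_sub 1).fun_neg.fun_div
    (((hasDerivAt_pow 2 t).add_const c).const_add 1) hs).congr_deriv ?_
  norm_num
  field_simp
  ring

theorem hasDerivAt_pdx_phi0_line {c : ℝ} (hc : 0 ≤ c) (t : ℝ) :
    HasDerivAt (fun t => 4 * t / (1 + (t ^ 2 + c)) ^ 2)
      ((4 * (1 + (t ^ 2 + c)) - 16 * t ^ 2) / (1 + (t ^ 2 + c)) ^ 3) t := by
  have hs : 1 + (t ^ 2 + c) ≠ 0 := by positivity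
  refine (((hasDerivAt_id' t).const_mul 4).fun_div
    ((((hasDerivAt_pow 2 t).add_const c).const_add 1).fun_pow 2) (pow_ne_zero 2 hs)).congr_deriv ?_
  norm_num
  field_simp
  ring

theorem pdx_phi0 (p : ℝ × ℝ) : pdx phi0 p = 4 * p.1 / (1 + p.1 ^ 2 + p.2 ^ 2) ^ 2 := by
  refine pdx_eq_of_hasDerivAt (differentiable_phi0 p) ?_
  convert hasDerivAt_phi0_line (sq_nonneg p.2) p.1 using 1
  · funext t
    simp only [phi0]
    ring
  · ring

theorem pdy_phi0 (p : ℝ × ℝ) : pdy phi0 p = 4 * p.2 / (1 + p.1 ^ 2 + p.2 ^ 2) ^ 2 := by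
  refine pdy_eq_of_hasDerivAt (differentiable_phi0 p) ?_
  convert hasDerivAt_phi0_line (sq_nonneg p.1) p.2 using 1
  · funext t
    simp only [phi0]
    ring
  · ring

theorem lap_phi0 (p : ℝ × ℝ) : lap phi0 p + 8 / (1 + p.1 ^ 2 + p.2 ^ 2) ^ 2 * phi0 p = 0 := by
  have hxx : pdx (pdx phi0) p =
      (4 * (1 + p.1 ^ 2 + p.2 ^ 2) - 16 * p.1 ^ 2) / (1 + p.1 ^ 2 + p.2 ^ 2) ^ 3 := by
    rw [funext pdx_phi0]
    refine pdx_eq_of_hasDerivAt (by fun_prop (disch := positivity)) ?_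
    convert hasDerivAt_pdx_phi0_line (sq_nonneg p.2) p.1 using 1
    · funext t
      ring
    · ring
  have hyy : pdy (pdy phi0) p =
      (4 * (1 + p.1 ^ 2 + p.2 ^ 2) - 16 * p.2 ^ 2) / (1 + p.1 ^ 2 + p.2 ^ 2) ^ 3 := by
    rw [funext pdy_phi0]
    refine pdy_eq_of_hasDerivAt (by fun_prop (disch := positivity)) ?_
    convert hasDerivAt_pdx_phi0_line (sq_nonneg p.1) p.2 using 1
    · funext t
      ring
    · ring
  have hs : 1 + p.1 ^ 2 + p.2 ^ 2 ≠ 0 := by positivity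
  rw [lap, hxx, hyy, phi0]
  field_simp
  ring

end Phi0

/-- On an open subset `V` of the unit disk, a twice differentiable `φ` satisfies
`Δφ + 8φ/(1 + x² + y²)² = 0` iff `ψ = φ/φ₀` satisfies
`Δψ + (2/φ₀)(φ₀ₓ ψ_x + φ₀_y ψ_y) = 0`. -/
theorem pde_transform_by_phi0
    (V : Set (ℝ × ℝ)) (hVo : IsOpen V)
    (hVD : V ⊆ {p : ℝ × ℝ | p.1 ^ 2 + p.2 ^ 2 < 1})
    (φ : ℝ × ℝ → ℝ)
    (hd : ∀ p ∈ V, DifferentiableAt ℝ φ p ∧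
      DifferentiableAt ℝ (pdx φ) p ∧ DifferentiableAt ℝ (pdy φ) p) :
    letI ψ : ℝ × ℝ → ℝ := fun q => φ q / phi0 q
    (∀ p ∈ V, lap φ p + 8 * φ p / (1 + p.1 ^ 2 + p.2 ^ 2) ^ 2 = 0) ↔
      (∀ p ∈ V, lap ψ p +
        (2 / phi0 p) * (pdx phi0 p * pdx ψ p + pdy phi0 p * pdy ψ p) = 0) := by
  have hφ : DifferentiableOn ℝ φ V := fun p hp => (hd p hp).1.differentiableWithinAt
  have hφ' : DifferentiableOn ℝ (fderiv ℝ φ) V := fun p hp =>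
    (differentiableAt_fderiv_of_pdx_pdy (hd p hp).2.1 (hd p hp).2.2).differentiableWithinAt
  have hphi0' : Differentiable ℝ (fderiv ℝ phi0) :=
    ((contDiff_phi0 (n := 2)).fderiv_right le_rfl).differentiable one_ne_zero
  have h := lap_add_mul_eq_zero_iff_of_lap_add_mul_eq_zero hVo hφ hφ'
    differentiable_phi0.differentiableOn hphi0'.differentiableOn
    (fun p hp => (phi0_neg (hVD hp)).ne) (fun p _ => lap_phi0 p)
  simpa only [div_mul_eq_mul_div] using h
end

section
/- For every natural number n and every complex number c, the function u : ℝ² → ℝ defined by u(x,y) ≔ Re( c · (1 − 2·(x² + y²)/((n+1)·(1 + x² + y²))) · (x + iy)ⁿ ) satisfies Δu + 8·u/(1 + x² + y²)² = 0 at every point of ℝ². -/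
/-!
Write `u = φ · h` with `h = Re (c zⁿ)` and `φ (x, y) = g (x² + y²)`,
`g t = 1 - 2t / ((n + 1)(1 + t))`. Since `h` is harmonic and homogeneous of degree `n`
(`x h_x + y h_y = n h`), the product rule for the Laplacian gives
`Δ(φ h) = (4 (n + 1) g' + 4 t g'') h` at `t = x² + y²`, and `g` solves
`4 (n + 1) g' + 4 t g'' + 8 g / (1 + t)² = 0`.
-/

open Complex

theorem Complex.re_mul_ofReal_mul (c w : ℂ) (r : ℝ) : (c * r * w).re = r * (c * w).re := by
  rw [mul_right_comm, mul_comm _ (r : ℂ), re_ofReal_mul]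

section PartialDerivatives

variable {f g : ℝ × ℝ → ℝ} {p : ℝ × ℝ}

theorem HasFDerivAt.pdx_eq {f' : ℝ × ℝ →L[ℝ] ℝ} (h : HasFDerivAt f f' p) :
    pdx f p = f' (1, 0) := by
  rw [pdx, h.fderiv]

theorem HasFDerivAt.pdy_eq {f' : ℝ × ℝ →L[ℝ] ℝ} (h : HasFDerivAt f f' p) :
    pdy f p = f' (0, 1) := by
  rw [pdy, h.fderiv]

theorem pdx_add (hf : DifferentiableAt ℝ f p) (hg : DifferentiableAt ℝ g p) :
    pdx (f + g) p = pdx f p + pdx g p := by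
  rw [pdx, fderiv_add hf hg]; rfl

theorem pdy_add (hf : DifferentiableAt ℝ f p) (hg : DifferentiableAt ℝ g p) :
    pdy (f + g) p = pdy f p + pdy g p := by
  rw [pdy, fderiv_add hf hg]; rfl

theorem pdx_mul (hf : DifferentiableAt ℝ f p) (hg : DifferentiableAt ℝ g p) :
    pdx (f * g) p = pdx f p * g p + f p * pdx g p := by
  rw [pdx, fderiv_mul hf hg, pdx, pdx]
  simp only [add_apply, smul_apply, smul_eq_mul]
  ring

theorem pdy_mul (hf : DifferentiableAt ℝ f p) (hg : DifferentiableAt ℝ g p) :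
    pdy (f * g) p = pdy f p * g p + f p * pdy g p := by
  rw [pdy, fderiv_mul hf hg, pdy, pdy]
  simp only [add_apply, smul_apply, smul_eq_mul]
  ring

theorem ContDiff.pdx {n : WithTop ℕ∞} (hf : ContDiff ℝ (n + 1) f) : ContDiff ℝ n (pdx f) :=
  (hf.fderiv_right le_rfl).clm_apply contDiff_const

theorem ContDiff.pdy {n : WithTop ℕ∞} (hf : ContDiff ℝ (n + 1) f) : ContDiff ℝ n (pdy f) :=
  (hf.fderiv_right le_rfl).clm_apply contDiff_const

theorem lap_mul_s16 (hf : ContDiff ℝ 2 f) (hg : ContDiff ℝ 2 g) :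
    lap (f * g) p =
      lap f p * g p + 2 * (pdx f p * pdx g p + pdy f p * pdy g p) + f p * lap g p := by
  have hf1 : Differentiable ℝ f := hf.differentiable two_ne_zero
  have hg1 : Differentiable ℝ g := hg.differentiable two_ne_zero
  have hfx : Differentiable ℝ (pdx f) := hf.pdx.differentiable one_ne_zero
  have hfy : Differentiable ℝ (pdy f) := hf.pdy.differentiable one_ne_zero
  have hgx : Differentiable ℝ (pdx g) := hg.pdx.differentiable one_ne_zero
  have hgy : Differentiable ℝ (pdy g) := hg.pdy.differentiable one_ne_zero
  have hx : pdx (f * g) = pdx f * g + f * pdx g := funext fun q => pdx_mul (hf1 q) (hg1 q)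
  have hy : pdy (f * g) = pdy f * g + f * pdy g := funext fun q => pdy_mul (hf1 q) (hg1 q)
  rw [lap, lap, lap, hx, hy, pdx_add ((hfx p).mul (hg1 p)) ((hf1 p).mul (hgx p)),
    pdy_add ((hfy p).mul (hg1 p)) ((hf1 p).mul (hgy p)), pdx_mul (hfx p) (hg1 p),
    pdx_mul (hf1 p) (hgx p), pdy_mul (hfy p) (hg1 p), pdy_mul (hf1 p) (hgy p)]
  ring

end PartialDerivatives

section Holomorphic

variable {f : ℂ → ℂ} {p : ℝ × ℝ}

theorem hasFDerivAt_re_comp {f' : ℂ} (hf : HasDerivAt f f' (p.1 + p.2 * I)) :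
    HasFDerivAt (fun q : ℝ × ℝ => (f (q.1 + q.2 * I)).re)
      (reCLM.comp (((ContinuousLinearMap.toSpanSingleton ℂ f').restrictScalars ℝ).comp
        equivRealProdCLM.symm.toContinuousLinearMap)) p := by
  have hz : (fun q : ℝ × ℝ => (q.1 : ℂ) + q.2 * I) = equivRealProdCLM.symm :=
    funext fun q => (equivRealProdCLM_symm_apply q).symm
  have hL : HasFDerivAt (fun q : ℝ × ℝ => (q.1 : ℂ) + q.2 * I)
      equivRealProdCLM.symm.toContinuousLinearMap p := by
    rw [hz]; exact equivRealProdCLM.symm.hasFDerivAt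
  exact reCLM.hasFDerivAt.comp p ((hf.hasFDerivAt.restrictScalars ℝ).comp p hL)

theorem pdx_re_comp (hf : DifferentiableAt ℂ f (p.1 + p.2 * I)) :
    pdx (fun q => (f (q.1 + q.2 * I)).re) p = (deriv f (p.1 + p.2 * I)).re := by
  rw [(hasFDerivAt_re_comp hf.hasDerivAt).pdx_eq]
  simp

theorem pdy_re_comp (hf : DifferentiableAt ℂ f (p.1 + p.2 * I)) :
    pdy (fun q => (f (q.1 + q.2 * I)).re) p = (I * deriv f (p.1 + p.2 * I)).re := by
  rw [(hasFDerivAt_re_comp hf.hasDerivAt).pdy_eq]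
  simp

theorem lap_re_comp (hf : Differentiable ℂ f) : lap (fun q => (f (q.1 + q.2 * I)).re) p = 0 := by
  have hx : pdx (fun q => (f (q.1 + q.2 * I)).re) = fun q => (deriv f (q.1 + q.2 * I)).re :=
    funext fun q => pdx_re_comp (hf _)
  have hy : pdy (fun q => (f (q.1 + q.2 * I)).re) = fun q => (I * deriv f (q.1 + q.2 * I)).re :=
    funext fun q => pdy_re_comp (hf _)
  rw [lap, hx, hy, pdx_re_comp (hf.deriv _), pdy_re_comp ((hf.deriv.const_mul I) _),
    deriv_const_mul _ (hf.deriv _)]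
  simp [← mul_assoc]

theorem contDiff_re_comp {n : WithTop ℕ∞} (hf : Differentiable ℂ f) :
    ContDiff ℝ n (fun q : ℝ × ℝ => (f (q.1 + q.2 * I)).re) := by
  have hz : (fun q : ℝ × ℝ => (q.1 : ℂ) + q.2 * I) = equivRealProdCLM.symm :=
    funext fun q => (equivRealProdCLM_symm_apply q).symm
  have hL : ContDiff ℝ n (fun q : ℝ × ℝ => (q.1 : ℂ) + q.2 * I) := by
    rw [hz]; exact equivRealProdCLM.symm.contDiff
  exact reCLM.contDiff.comp ((hf.contDiff.restrict_scalars ℝ).comp hL)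

theorem fst_mul_pdx_add_snd_mul_pdy_re_comp (hf : DifferentiableAt ℂ f (p.1 + p.2 * I)) :
    p.1 * pdx (fun q => (f (q.1 + q.2 * I)).re) p
        + p.2 * pdy (fun q => (f (q.1 + q.2 * I)).re) p =
      ((p.1 + p.2 * I) * deriv f (p.1 + p.2 * I)).re := by
  rw [pdx_re_comp hf, pdy_re_comp hf]
  simp only [mul_re, add_re, mul_im, add_im, ofReal_re, ofReal_im, I_re, I_im]
  ring

theorem fst_mul_pdx_add_snd_mul_pdy_re_const_mul_pow (c : ℂ) (n : ℕ) :
    p.1 * pdx (fun q => (c * (q.1 + q.2 * I) ^ n).re) p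
        + p.2 * pdy (fun q => (c * (q.1 + q.2 * I) ^ n).re) p =
      n * (c * (p.1 + p.2 * I) ^ n).re := by
  rw [fst_mul_pdx_add_snd_mul_pdy_re_comp (f := fun z => c * z ^ n) (by fun_prop),
    deriv_const_mul _ (by fun_prop), deriv_pow_field, ← re_ofReal_mul]
  congr 1
  rcases n with _ | n
  · simp
  · push_cast
    ring

end Holomorphic

section Radial

variable {g g' g'' : ℝ → ℝ} {p : ℝ × ℝ}

theorem hasFDerivAt_comp_sq_add_sq {d : ℝ} (hg : HasDerivAt g d (p.1 ^ 2 + p.2 ^ 2)) :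
    HasFDerivAt (fun q : ℝ × ℝ => g (q.1 ^ 2 + q.2 ^ 2))
      ((2 * d * p.1) • ContinuousLinearMap.fst ℝ ℝ ℝ
        + (2 * d * p.2) • ContinuousLinearMap.snd ℝ ℝ ℝ) p := by
  have h : HasFDerivAt (fun q : ℝ × ℝ => g (q.1 ^ 2 + q.2 ^ 2)) _ p :=
    hg.comp_hasFDerivAt p (((hasFDerivAt_fst (𝕜 := ℝ) (p := p)).pow 2).add
      ((hasFDerivAt_snd (𝕜 := ℝ) (p := p)).pow 2))
  refine h.congr_fderiv ?_
  ext <;>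
    simp only [Nat.add_one_sub_one, pow_one, nsmul_eq_mul, Nat.cast_ofNat, smul_add,
      ContinuousLinearMap.add_comp, ContinuousLinearMap.smul_comp,
      ContinuousLinearMap.fst_comp_inl, ContinuousLinearMap.snd_comp_inl,
      ContinuousLinearMap.fst_comp_inr, ContinuousLinearMap.snd_comp_inr, smul_zero, add_zero, zero_add, smul_apply,
      ContinuousLinearMap.id_apply, smul_eq_mul, mul_one] <;>
    ring

theorem pdx_comp_sq_add_sq {d : ℝ} (hg : HasDerivAt g d (p.1 ^ 2 + p.2 ^ 2)) :
    pdx (fun q => g (q.1 ^ 2 + q.2 ^ 2)) p = 2 * d * p.1 := by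
  rw [(hasFDerivAt_comp_sq_add_sq hg).pdx_eq]
  simp

theorem pdy_comp_sq_add_sq {d : ℝ} (hg : HasDerivAt g d (p.1 ^ 2 + p.2 ^ 2)) :
    pdy (fun q => g (q.1 ^ 2 + q.2 ^ 2)) p = 2 * d * p.2 := by
  rw [(hasFDerivAt_comp_sq_add_sq hg).pdy_eq]
  simp

theorem lap_comp_sq_add_sq (hg : ∀ t, 0 ≤ t → HasDerivAt g (g' t) t)
    (hg' : ∀ t, 0 ≤ t → HasDerivAt g' (g'' t) t) :
    lap (fun q => g (q.1 ^ 2 + q.2 ^ 2)) p =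
      4 * g' (p.1 ^ 2 + p.2 ^ 2) + 4 * (p.1 ^ 2 + p.2 ^ 2) * g'' (p.1 ^ 2 + p.2 ^ 2) := by
  have hx : pdx (fun q => g (q.1 ^ 2 + q.2 ^ 2)) = fun q => 2 * g' (q.1 ^ 2 + q.2 ^ 2) * q.1 :=
    funext fun q => pdx_comp_sq_add_sq (hg _ (by positivity))
  have hy : pdy (fun q => g (q.1 ^ 2 + q.2 ^ 2)) = fun q => 2 * g' (q.1 ^ 2 + q.2 ^ 2) * q.2 :=
    funext fun q => pdy_comp_sq_add_sq (hg _ (by positivity))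
  have hg'p := hasFDerivAt_comp_sq_add_sq (hg' (p.1 ^ 2 + p.2 ^ 2) (by positivity))
  have hxx : HasFDerivAt (fun q : ℝ × ℝ => 2 * g' (q.1 ^ 2 + q.2 ^ 2) * q.1) _ p :=
    (hg'p.const_mul 2).mul hasFDerivAt_fst
  have hyy : HasFDerivAt (fun q : ℝ × ℝ => 2 * g' (q.1 ^ 2 + q.2 ^ 2) * q.2) _ p :=
    (hg'p.const_mul 2).mul hasFDerivAt_snd
  rw [lap, hx, hy, hxx.pdx_eq, hyy.pdy_eq]
  simp only [smul_add, add_apply, smul_apply, ContinuousLinearMap.coe_fst',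
    ContinuousLinearMap.coe_snd', smul_eq_mul, mul_one, mul_zero, add_zero, zero_add]
  ring

theorem lap_comp_sq_add_sq_mul {h : ℝ × ℝ → ℝ} {k : ℝ}
    (hg : ∀ t, 0 ≤ t → HasDerivAt g (g' t) t) (hg' : ∀ t, 0 ≤ t → HasDerivAt g' (g'' t) t)
    (hgC : ContDiff ℝ 2 (fun q : ℝ × ℝ => g (q.1 ^ 2 + q.2 ^ 2))) (hh : ContDiff ℝ 2 h)
    (hh_lap : lap h p = 0) (hh_euler : p.1 * pdx h p + p.2 * pdy h p = k * h p) :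
    lap (fun q => g (q.1 ^ 2 + q.2 ^ 2) * h q) p =
      (4 * (k + 1) * g' (p.1 ^ 2 + p.2 ^ 2)
        + 4 * (p.1 ^ 2 + p.2 ^ 2) * g'' (p.1 ^ 2 + p.2 ^ 2)) * h p := by
  have hgp := hg (p.1 ^ 2 + p.2 ^ 2) (by positivity)
  rw [show (fun q => g (q.1 ^ 2 + q.2 ^ 2) * h q) = (fun q => g (q.1 ^ 2 + q.2 ^ 2)) * h from rfl,
    lap_mul_s16 hgC hh, lap_comp_sq_add_sq hg hg', pdx_comp_sq_add_sq hgp, pdy_comp_sq_add_sq hgp,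
    hh_lap]
  linear_combination 4 * g' (p.1 ^ 2 + p.2 ^ 2) * hh_euler

end Radial

section Profile

variable {n : ℕ} {t : ℝ}

noncomputable def modeProfile (n : ℕ) (t : ℝ) : ℝ := 1 - 2 * t / ((n + 1) * (1 + t))

theorem hasDerivAt_modeProfile (ht : 1 + t ≠ 0) :
    HasDerivAt (modeProfile n) (-2 / ((n + 1) * (1 + t) ^ 2)) t := by
  have hA : (n + 1 : ℝ) * (1 + t) ≠ 0 := mul_ne_zero (by positivity) ht
  have h := (hasDerivAt_const t (1 : ℝ)).sub
    (((hasDerivAt_id t).const_mul 2).div (((hasDerivAt_id t).const_add 1).const_mul _) hA)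
  refine h.congr_deriv ?_
  simp only [id]
  field_simp
  ring

theorem hasDerivAt_modeProfile_deriv (ht : 1 + t ≠ 0) :
    HasDerivAt (fun t : ℝ => -2 / ((n + 1) * (1 + t) ^ 2)) (4 / ((n + 1) * (1 + t) ^ 3)) t := by
  have hA : (n + 1 : ℝ) * (1 + t) ^ 2 ≠ 0 := mul_ne_zero (by positivity) (pow_ne_zero 2 ht)
  have h := (hasDerivAt_const t (-2 : ℝ)).div
    ((((hasDerivAt_id t).const_add 1).pow 2).const_mul _) hA
  refine h.congr_deriv ?_
  simp only [id, Pi.pow_apply]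
  field_simp
  ring

theorem contDiff_modeProfile_comp_sq_add_sq :
    ContDiff ℝ 2 (fun q : ℝ × ℝ => modeProfile n (q.1 ^ 2 + q.2 ^ 2)) :=
  contDiff_const.sub ((by fun_prop : ContDiff ℝ 2 fun q : ℝ × ℝ => 2 * (q.1 ^ 2 + q.2 ^ 2)).div
    (by fun_prop) fun q => by positivity)

theorem modeProfile_ode (ht : 1 + t ≠ 0) :
    4 * (n + 1) * (-2 / ((n + 1) * (1 + t) ^ 2)) + 4 * t * (4 / ((n + 1) * (1 + t) ^ 3))
      + 8 * modeProfile n t / (1 + t) ^ 2 = 0 := by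
  have hA : (n + 1 : ℝ) ≠ 0 := by positivity
  rw [modeProfile]
  field_simp
  ring

end Profile

/-- For each `n ∈ ℕ`, `c ∈ ℂ`, the function
`u(x,y) = Re(c (1 − 2(x²+y²)/((n+1)(1+x²+y²))) (x+iy)ⁿ)` solves
`Δu + 8u/(1 + x² + y²)² = 0` on `ℝ²`. -/
theorem mode_solutions_kappa_one (n : ℕ) (c : ℂ) :
    letI u : ℝ × ℝ → ℝ := fun p =>
      (c * (((1 - 2 * (p.1 ^ 2 + p.2 ^ 2) / (((n : ℝ) + 1) * (1 + p.1 ^ 2 + p.2 ^ 2))) : ℝ) : ℂ)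
        * ((p.1 : ℂ) + (p.2 : ℂ) * Complex.I) ^ n).re
    ∀ p : ℝ × ℝ, lap u p + 8 * u p / (1 + p.1 ^ 2 + p.2 ^ 2) ^ 2 = 0 := by
  intro p
  simp only [re_mul_ofReal_mul, add_assoc, ← modeProfile.eq_1]
  have ht : 1 + (p.1 ^ 2 + p.2 ^ 2) ≠ 0 := by positivity
  have hf : Differentiable ℂ (fun z : ℂ => c * z ^ n) := by fun_prop
  rw [lap_comp_sq_add_sq_mul (fun s hs => hasDerivAt_modeProfile (by positivity))
    (fun s hs => hasDerivAt_modeProfile_deriv (by positivity)) contDiff_modeProfile_comp_sq_add_sq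
    (contDiff_re_comp hf) (lap_re_comp hf)
    (fst_mul_pdx_add_snd_mul_pdy_re_const_mul_pow c n)]
  linear_combination (c * (p.1 + p.2 * I) ^ n).re * modeProfile_ode (n := n) ht
end

section
/- Let U ⊆ ℂ be an open set contained in the open unit disk {z : |z| < 1}, and let F : U → ℂ be holomorphic (complex-differentiable at every point of U), with complex derivative F′. Define φ : U → ℝ by φ(z) ≔ Re( ((1 + |z|²)/(1 − |z|²))·F(z) + z·F′(z) ). Then, regarding φ as a function of (x,y) with z = x + iy, one has Δφ − 8·φ/(1 − |z|²)² = 0 at every point of U. -/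
/-!
Write `φ = Re Ψ` with `Ψ(z) = h(|z|²) F(z) + z F'(z)` and `h(t) = (1 + t) / (1 - t)`.
Holomorphic functions are harmonic and satisfy `∂_y = i ∂_x`, so for a smooth factor `u` and
holomorphic `H`, `K` one has `Δ Re(u H + K) = Re(Δu · H + 2 (u_x + i u_y) H')`. For the radial
factor `u = h(|z|²)` this is `Re(4 (h' + t h'') F + 4 z h' F')` with `t = |z|²`, and
`h' = 2 / (1 - t)²`, `h'' = 4 / (1 - t)³` give `4 (h' + t h'') = 8 h / (1 - t)²` and
`4 h' = 8 / (1 - t)²`.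
-/

open Complex ContinuousLinearMap Filter Topology

def toComplex (q : ℝ × ℝ) : ℂ := q.1 + q.2 * I

section Partials

variable {E : Type*} [NormedAddCommGroup E] [NormedSpace ℝ E]

def partialsCLM (a b : E) : ℝ × ℝ →L[ℝ] E :=
  (toSpanSingleton ℝ a).coprod (toSpanSingleton ℝ b)

@[simp]
lemma partialsCLM_apply (a b : E) (v : ℝ × ℝ) : partialsCLM a b v = v.1 • a + v.2 • b := rfl

lemma eq_partialsCLM_iff {L : ℝ × ℝ →L[ℝ] E} {a b : E} :
    L = partialsCLM a b ↔ L (1, 0) = a ∧ L (0, 1) = b := by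
  constructor
  · rintro rfl
    simp
  · rintro ⟨ha, hb⟩
    ext
    · simpa using ha
    · simpa using hb

end Partials

lemma toComplex_eq_partialsCLM : toComplex = partialsCLM 1 I := by
  funext q
  simp [toComplex, Complex.real_smul]

lemma hasFDerivAt_toComplex (q : ℝ × ℝ) : HasFDerivAt toComplex (partialsCLM 1 I) q :=
  toComplex_eq_partialsCLM ▸ (partialsCLM 1 I).hasFDerivAt

lemma continuous_toComplex : Continuous toComplex :=
  toComplex_eq_partialsCLM ▸ (partialsCLM 1 I).continuous

lemma norm_toComplex_sq (q : ℝ × ℝ) : ‖toComplex q‖ ^ 2 = q.1 ^ 2 + q.2 ^ 2 := by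
  rw [Complex.sq_norm, toComplex, Complex.normSq_add_mul_I]

lemma HasDerivAt.hasFDerivAt_comp_toComplex {H : ℂ → ℂ} {h : ℂ} {q : ℝ × ℝ}
    (hH : HasDerivAt H h (toComplex q)) :
    HasFDerivAt (fun q => H (toComplex q)) (partialsCLM h (I * h)) q :=
  (hH.comp_hasFDerivAt q (hasFDerivAt_toComplex q)).congr_fderiv <|
    eq_partialsCLM_iff.2 ⟨by simp, by simp [mul_comm]⟩

lemma HasFDerivAt.mul_partials {𝔸 : Type*} [NormedCommRing 𝔸] [NormedAlgebra ℝ 𝔸]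
    {u v : ℝ × ℝ → 𝔸} {a b c d : 𝔸} {q : ℝ × ℝ}
    (hu : HasFDerivAt u (partialsCLM a b) q) (hv : HasFDerivAt v (partialsCLM c d) q) :
    HasFDerivAt (fun q => u q * v q) (partialsCLM (a * v q + u q * c) (b * v q + u q * d)) q :=
  (hu.mul hv).congr_fderiv <|
    eq_partialsCLM_iff.2 ⟨by simp [add_comm, mul_comm], by simp [add_comm, mul_comm]⟩

lemma hasFDerivAt_fst_partials (q : ℝ × ℝ) :
    HasFDerivAt (fun q : ℝ × ℝ => q.1) (partialsCLM (1 : ℝ) 0) q :=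
  hasFDerivAt_fst.congr_fderiv <| eq_partialsCLM_iff.2 ⟨rfl, rfl⟩

lemma hasFDerivAt_snd_partials (q : ℝ × ℝ) :
    HasFDerivAt (fun q : ℝ × ℝ => q.2) (partialsCLM (0 : ℝ) 1) q :=
  hasFDerivAt_snd.congr_fderiv <| eq_partialsCLM_iff.2 ⟨rfl, rfl⟩

lemma hasFDerivAt_norm_toComplex_sq (q : ℝ × ℝ) :
    HasFDerivAt (fun q => ‖toComplex q‖ ^ 2) (partialsCLM (2 * q.1) (2 * q.2)) q := by
  simp_rw [norm_toComplex_sq, sq]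
  exact (((hasFDerivAt_fst_partials q).mul_partials (hasFDerivAt_fst_partials q)).fun_add
    ((hasFDerivAt_snd_partials q).mul_partials (hasFDerivAt_snd_partials q))).congr_fderiv <|
    eq_partialsCLM_iff.2 ⟨by simp; ring, by simp; ring⟩

lemma HasDerivAt.hasFDerivAt_comp_norm_toComplex_sq {E : Type*} [NormedAddCommGroup E]
    [NormedSpace ℝ E] {h : ℝ → E} {h' : E} {q : ℝ × ℝ}
    (hh : HasDerivAt h h' (‖toComplex q‖ ^ 2)) :
    HasFDerivAt (fun q => h (‖toComplex q‖ ^ 2))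
      (partialsCLM ((2 * q.1) • h') ((2 * q.2) • h')) q :=
  (hh.hasFDerivAt.comp q (hasFDerivAt_norm_toComplex_sq q)).congr_fderiv <|
    eq_partialsCLM_iff.2 ⟨by simp, by simp⟩

lemma pdx_re_of_hasFDerivAt {f : ℝ × ℝ → ℂ} {L : ℝ × ℝ →L[ℝ] ℂ} {q : ℝ × ℝ}
    (hf : HasFDerivAt f L q) : pdx (fun q => (f q).re) q = (L (1, 0)).re := by
  have hre : HasFDerivAt (fun q => (f q).re) (reCLM.comp L) q := reCLM.hasFDerivAt.comp q hf
  simp [pdx, hre.fderiv]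

lemma pdy_re_of_hasFDerivAt {f : ℝ × ℝ → ℂ} {L : ℝ × ℝ →L[ℝ] ℂ} {q : ℝ × ℝ}
    (hf : HasFDerivAt f L q) : pdy (fun q => (f q).re) q = (L (0, 1)).re := by
  have hre : HasFDerivAt (fun q => (f q).re) (reCLM.comp L) q := reCLM.hasFDerivAt.comp q hf
  simp [pdy, hre.fderiv]

lemma lap_re_of_hasFDerivAt {f fx fy : ℝ × ℝ → ℂ} {Lx Ly : ℝ × ℝ →L[ℝ] ℂ} {p : ℝ × ℝ}
    (hf : ∀ᶠ q in 𝓝 p, HasFDerivAt f (partialsCLM (fx q) (fy q)) q)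
    (hfx : HasFDerivAt fx Lx p) (hfy : HasFDerivAt fy Ly p) :
    lap (fun q => (f q).re) p = (Lx (1, 0) + Ly (0, 1)).re := by
  have hx : pdx (fun q => (f q).re) =ᶠ[𝓝 p] fun q => (fx q).re :=
    hf.mono fun q hq => by simp [pdx_re_of_hasFDerivAt hq]
  have hy : pdy (fun q => (f q).re) =ᶠ[𝓝 p] fun q => (fy q).re :=
    hf.mono fun q hq => by simp [pdy_re_of_hasFDerivAt hq]
  rw [lap, add_re, ← pdx_re_of_hasFDerivAt hfx, ← pdy_re_of_hasFDerivAt hfy, pdx, pdy, pdx, pdy,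
    hx.fderiv_eq, hy.fderiv_eq]

lemma HasFDerivAt.mul_comp_toComplex_add_comp {u : ℝ × ℝ → ℂ} {a b h k : ℂ} {H K : ℂ → ℂ}
    {q : ℝ × ℝ} (hu : HasFDerivAt u (partialsCLM a b) q) (hH : HasDerivAt H h (toComplex q))
    (hK : HasDerivAt K k (toComplex q)) :
    HasFDerivAt (fun q => u q * H (toComplex q) + K (toComplex q))
      (partialsCLM (a * H (toComplex q) + (u q * h + k))
        (b * H (toComplex q) + I * (u q * h + k))) q :=
  ((hu.mul_partials hH.hasFDerivAt_comp_toComplex).add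
    hK.hasFDerivAt_comp_toComplex).congr_fderiv <|
    eq_partialsCLM_iff.2 ⟨by simp; ring, by simp; ring⟩

theorem lap_re_mul_comp_toComplex_add_comp {u ux uy : ℝ × ℝ → ℂ} {Lx Ly : ℝ × ℝ →L[ℝ] ℂ}
    {H K : ℂ → ℂ} {p : ℝ × ℝ}
    (hu : ∀ᶠ q in 𝓝 p, HasFDerivAt u (partialsCLM (ux q) (uy q)) q)
    (hux : HasFDerivAt ux Lx p) (huy : HasFDerivAt uy Ly p)
    (hH : AnalyticAt ℂ H (toComplex p)) (hK : AnalyticAt ℂ K (toComplex p)) :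
    lap (fun q => (u q * H (toComplex q) + K (toComplex q)).re) p =
      ((Lx (1, 0) + Ly (0, 1)) * H (toComplex p)
        + 2 * (ux p + I * uy p) * deriv H (toComplex p)).re := by
  have hd : ∀ {G : ℂ → ℂ} {q}, AnalyticAt ℂ G (toComplex q) →
      HasDerivAt G (deriv G (toComplex q)) (toComplex q) :=
    fun hG => hG.differentiableAt.hasDerivAt
  have hHK : ∀ᶠ q in 𝓝 p, AnalyticAt ℂ H (toComplex q) ∧ AnalyticAt ℂ K (toComplex q) :=
    continuous_toComplex.continuousAt.eventually
      (hH.eventually_analyticAt.and hK.eventually_analyticAt)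
  have hΨ := (hu.and hHK).mono fun q ⟨huq, hHq, hKq⟩ =>
    huq.mul_comp_toComplex_add_comp (hd hHq) (hd hKq)
  have hu' := hu.self_of_nhds.mul_comp_toComplex_add_comp (hd hH.deriv) (hd hK.deriv)
  have hΨx := (hux.fun_mul (hd hH).hasFDerivAt_comp_toComplex).fun_add hu'
  have hΨy := (huy.fun_mul (hd hH).hasFDerivAt_comp_toComplex).fun_add (hu'.const_mul I)
  rw [lap_re_of_hasFDerivAt hΨ hΨx hΨy]
  congr 1
  simp only [add_apply, smul_apply, partialsCLM_apply, one_smul, zero_smul, add_zero, smul_eq_mul,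
    smul_add, zero_add]
  linear_combination (u p * deriv (deriv H) (toComplex p) + deriv (deriv K) (toComplex p)) * I_sq

theorem lap_re_radial_mul_comp_toComplex_add_comp {h h₁ : ℝ → ℂ} {h₂ : ℂ} {H K : ℂ → ℂ}
    {p : ℝ × ℝ} (hh : ∀ᶠ t in 𝓝 (‖toComplex p‖ ^ 2), HasDerivAt h (h₁ t) t)
    (hh₁ : HasDerivAt h₁ h₂ (‖toComplex p‖ ^ 2))
    (hH : AnalyticAt ℂ H (toComplex p)) (hK : AnalyticAt ℂ K (toComplex p)) :
    lap (fun q => (h (‖toComplex q‖ ^ 2) * H (toComplex q) + K (toComplex q)).re) p =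
      (4 * ((h₁ (‖toComplex p‖ ^ 2) + ((‖toComplex p‖ ^ 2 : ℝ) : ℂ) * h₂) * H (toComplex p)
        + toComplex p * h₁ (‖toComplex p‖ ^ 2) * deriv H (toComplex p))).re := by
  have hu := ((continuous_toComplex.norm.pow 2).tendsto p).eventually hh |>.mono
    fun q hq => hq.hasFDerivAt_comp_norm_toComplex_sq
  have hux := ((hasFDerivAt_fst_partials p).const_mul 2).smul
    hh₁.hasFDerivAt_comp_norm_toComplex_sq
  have huy := ((hasFDerivAt_snd_partials p).const_mul 2).smul
    hh₁.hasFDerivAt_comp_norm_toComplex_sq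
  rw [lap_re_mul_comp_toComplex_add_comp hu hux huy hH hK]
  have hnorm : (‖toComplex p‖ : ℂ) ^ 2 = (p.1 : ℂ) ^ 2 + (p.2 : ℂ) ^ 2 := by
    exact_mod_cast norm_toComplex_sq p
  have hz : toComplex p = p.1 + p.2 * I := rfl
  congr 1
  simp only [real_smul, ofReal_mul, ofReal_ofNat, add_apply, smul_apply, partialsCLM_apply,
    one_smul, zero_smul, add_zero, smulRight_apply, smul_eq_mul, mul_one, mul_zero, zero_add,
    Pi.pow_apply, ofReal_pow]
  linear_combination (-4 * h₂ * H (toComplex p)) * hnorm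
    - 4 * h₁ (‖toComplex p‖ ^ 2) * deriv H (toComplex p) * hz

lemma hasDerivAt_one_add_div_one_sub {t : ℝ} (ht : 1 - t ≠ 0) :
    HasDerivAt (fun t : ℝ => (1 + t) / (1 - t)) (2 / (1 - t) ^ 2) t := by
  refine (((hasDerivAt_id' t).const_add 1).fun_div
    ((hasDerivAt_id' t).const_sub 1) ht).congr_deriv ?_
  field_simp
  ring

lemma hasDerivAt_two_div_one_sub_sq {t : ℝ} (ht : 1 - t ≠ 0) :
    HasDerivAt (fun t : ℝ => 2 / (1 - t) ^ 2) (4 / (1 - t) ^ 3) t := by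
  refine ((hasDerivAt_const t (2 : ℝ)).fun_div (((hasDerivAt_id' t).const_sub 1).fun_pow 2)
    (pow_ne_zero 2 ht)).congr_deriv ?_
  field_simp
  ring

noncomputable def holomorphicPotential (F : ℂ → ℂ) (z : ℂ) : ℂ :=
  (((1 + ‖z‖ ^ 2) / (1 - ‖z‖ ^ 2) : ℝ) : ℂ) * F z + z * deriv F z

theorem lap_re_holomorphicPotential {F : ℂ → ℂ} {p : ℝ × ℝ}
    (hF : AnalyticAt ℂ F (toComplex p)) (hp : ‖toComplex p‖ < 1) :
    lap (fun q => (holomorphicPotential F (toComplex q)).re) p =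
      8 * (holomorphicPotential F (toComplex p)).re / (1 - ‖toComplex p‖ ^ 2) ^ 2 := by
  have hr : 1 - ‖toComplex p‖ ^ 2 ≠ 0 :=
    (sub_pos.2 (pow_lt_one₀ (norm_nonneg _) hp two_ne_zero)).ne'
  have hh : ∀ᶠ t in 𝓝 (‖toComplex p‖ ^ 2),
      HasDerivAt (fun t : ℝ => (((1 + t) / (1 - t) : ℝ) : ℂ)) (((2 / (1 - t) ^ 2 : ℝ) : ℂ)) t :=
    (continuousAt_const.sub continuousAt_id).eventually_ne hr |>.mono
      fun t ht => (hasDerivAt_one_add_div_one_sub ht).ofReal_comp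
  refine (lap_re_radial_mul_comp_toComplex_add_comp hh
    (hasDerivAt_two_div_one_sub_sq hr).ofReal_comp hF (analyticAt_id.mul hF.deriv)).trans ?_
  have hrC : (1 - (‖toComplex p‖ : ℂ) ^ 2) ≠ 0 := by exact_mod_cast hr
  rw [mul_div_right_comm, ← re_ofReal_mul]
  congr 1
  simp only [holomorphicPotential]
  push_cast
  field_simp
  ring

/-- If `F` is holomorphic on an open `U` contained in the unit disk, then
`φ(z) = Re(((1 + |z|²)/(1 − |z|²)) F(z) + z F′(z))`, viewed as a function of `(x,y)` with
`z = x + iy`, satisfies `Δφ − 8φ/(1 − |z|²)² = 0` on `U`. -/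
theorem holomorphic_potentials_kappa_neg_one
    (U : Set ℂ) (hU : IsOpen U) (hUD : U ⊆ {z : ℂ | ‖z‖ < 1})
    (F : ℂ → ℂ) (hF : ∀ z ∈ U, DifferentiableAt ℂ F z) :
    letI Φ : ℝ × ℝ → ℝ := fun p =>
      (((((1 + ‖((p.1 : ℂ) + (p.2 : ℂ) * Complex.I)‖ ^ 2) /
            (1 - ‖((p.1 : ℂ) + (p.2 : ℂ) * Complex.I)‖ ^ 2) : ℝ)) : ℂ) *
          F ((p.1 : ℂ) + (p.2 : ℂ) * Complex.I) +
        ((p.1 : ℂ) + (p.2 : ℂ) * Complex.I) *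
          deriv F ((p.1 : ℂ) + (p.2 : ℂ) * Complex.I)).re
    ∀ p : ℝ × ℝ, ((p.1 : ℂ) + (p.2 : ℂ) * Complex.I) ∈ U →
      lap Φ p - 8 * Φ p /
        (1 - ‖((p.1 : ℂ) + (p.2 : ℂ) * Complex.I)‖ ^ 2) ^ 2 = 0 := by
  have hFU : AnalyticOnNhd ℂ F U :=
    DifferentiableOn.analyticOnNhd (fun z hz => (hF z hz).differentiableWithinAt) hU
  intro p hp
  -- `Φ` unfolds to `fun q => (holomorphicPotential F (toComplex q)).re`.
  exact sub_eq_zero.2 (lap_re_holomorphicPotential (hFU _ hp) (hUD hp))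
end
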